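/- arXiv:1304.1724 — 3 statements merged into one kernel-verified Lean document; each statement's English description precedes it below -/
import Mathlib

section
/- Let α > 0 and 0 < β ≤ π, and let w : (0,β) → ℝ be a positive, twice continuously differentiable function satisfying (w^{1/α})'' + w^{1/α} ≤ 0 on (0,β). Then for every smooth function u with compact support in (0,β) satisfying ∫₀^β u(θ) w(θ) dθ = 0, one has the generalized Wirtinger inequality ∫₀^β u'(θ)² w(θ) dθ ≥ (1 + α) ∫₀^β u(θ)² w(θ) dθ. -/
open MeasureTheory Set

set_option maxHeartbeats 2000000

/-- Generalized Wirtinger inequality: if `α > 0`, `0 < β ≤ π`, and `w` is a positive `C²`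
weight on `(0,β)` with `(w^{1/α})'' + w^{1/α} ≤ 0`, then every smooth `u` compactly
supported in `(0,β)` with `∫₀^β u w = 0` satisfies
`∫₀^β (u')² w ≥ (1+α) ∫₀^β u² w`. -/
theorem generalized_wirtinger_ineq
    (α β : ℝ) (hα : 0 < α) (hβ0 : 0 < β) (hβπ : β ≤ Real.pi)
    (w : ℝ → ℝ)
    (hwpos : ∀ θ ∈ Ioo (0 : ℝ) β, 0 < w θ)
    (hwC2 : ContDiffOn ℝ 2 w (Ioo (0 : ℝ) β))
    (hwconc : ∀ θ ∈ Ioo (0 : ℝ) β,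
      iteratedDeriv 2 (fun t => w t ^ (1 / α)) θ + w θ ^ (1 / α) ≤ 0)
    (u : ℝ → ℝ) (hu : ContDiff ℝ (⊤ : ℕ∞) u) (husupp : HasCompactSupport u)
    (husuppin : tsupport u ⊆ Ioo (0 : ℝ) β)
    (horth : ∫ θ in Ioo (0 : ℝ) β, u θ * w θ = 0) :
    (1 + α) * ∫ θ in Ioo (0 : ℝ) β, u θ ^ 2 * w θ ≤
      ∫ θ in Ioo (0 : ℝ) β, deriv u θ ^ 2 * w θ := by
  -- ## Choice of a compact interval [a,b] ⊆ (0,β) containing the support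
  have hπ2 : β / 2 ∈ Ioo (0 : ℝ) β := ⟨by linarith, by linarith⟩
  have hKc : IsCompact (tsupport u ∪ {β / 2}) := husupp.union isCompact_singleton
  have hKne : (tsupport u ∪ {β / 2}).Nonempty := ⟨β / 2, Or.inr rfl⟩
  have hKsub : tsupport u ∪ {β / 2} ⊆ Ioo 0 β := by
    rintro x (hx | hx)
    · exact husuppin hx
    · rcases hx with rfl; exact hπ2
  have ha0K := hKc.sInf_mem hKne
  have hb0K := hKc.sSup_mem hKne
  have ha0 : sInf (tsupport u ∪ {β / 2}) ∈ Ioo (0 : ℝ) β := hKsub ha0K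
  have hb0 : sSup (tsupport u ∪ {β / 2}) ∈ Ioo (0 : ℝ) β := hKsub hb0K
  set a0 := sInf (tsupport u ∪ {β / 2}) with ha0def
  set b0 := sSup (tsupport u ∪ {β / 2}) with hb0def
  set a := a0 / 2 with hadef
  set b := (b0 + β) / 2 with hbdef
  have ha0b0 : a0 ≤ b0 := csInf_le_csSup hKne hKc.bddBelow hKc.bddAbove
  have ha : 0 < a := by have := ha0.1; simp only [hadef]; linarith
  have hb : b < β := by have := hb0.2; simp only [hbdef]; linarith
  have hab : a < b := by
    have h1 := ha0.1; have h2 := hb0.2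
    simp only [hadef, hbdef]; linarith
  have hsupp : tsupport u ⊆ Ioo a b := by
    intro x hx
    have h1 : a0 ≤ x := csInf_le hKc.bddBelow (Or.inl hx)
    have h2 : x ≤ b0 := le_csSup hKc.bddAbove (Or.inl hx)
    have := ha0.1; have := hb0.2
    constructor
    · simp only [hadef]; linarith
    · simp only [hbdef]; linarith
  have hIcc : Icc a b ⊆ Ioo (0 : ℝ) β := fun x hx =>
    ⟨lt_of_lt_of_le ha hx.1, lt_of_le_of_lt hx.2 hb⟩
  have hSopen : IsOpen (Ioo (0 : ℝ) β) := isOpen_Ioo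
  -- ## Derivatives of the weight
  set W1 := deriv w with hW1def
  set W2 := deriv (deriv w) with hW2def
  have hwc : ContinuousOn w (Ioo (0 : ℝ) β) := hwC2.continuousOn
  have hwd : ∀ x ∈ Ioo (0 : ℝ) β, HasDerivAt w (W1 x) x := by
    intro x hx
    exact ((hwC2.differentiableOn (by norm_num) x hx).differentiableAt
      (hSopen.mem_nhds hx)).hasDerivAt
  have hW1C : ContDiffOn ℝ 1 W1 (Ioo (0 : ℝ) β) :=
    hwC2.deriv_of_isOpen hSopen (by norm_num)
  have hW1c : ContinuousOn W1 (Ioo (0 : ℝ) β) := hW1C.continuousOn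
  have hW1d : ∀ x ∈ Ioo (0 : ℝ) β, HasDerivAt W1 (W2 x) x := by
    intro x hx
    exact ((hW1C.differentiableOn (by norm_num) x hx).differentiableAt
      (hSopen.mem_nhds hx)).hasDerivAt
  have hW2c : ContinuousOn W2 (Ioo (0 : ℝ) β) :=
    hW1C.continuousOn_deriv_of_isOpen hSopen (by norm_num)
  -- ## The pointwise consequence of concavity of w^{1/α}
  have key : ∀ x ∈ Ioo (0 : ℝ) β,
      W2 x * w x + (1 / α - 1) * W1 x ^ 2 + α * (w x * w x) ≤ 0 := by
    intro x hx
    have hwx := hwpos x hx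
    have hv1 : ∀ y ∈ Ioo (0 : ℝ) β, HasDerivAt (fun t => w t ^ (1 / α))
        (W1 y * (1 / α) * w y ^ (1 / α - 1)) y := fun y hy =>
      (hwd y hy).rpow_const (Or.inl (hwpos y hy).ne')
    have hveq : deriv (fun t => w t ^ (1 / α)) =ᶠ[nhds x]
        fun y => W1 y * (1 / α) * w y ^ (1 / α - 1) := by
      filter_upwards [hSopen.mem_nhds hx] with y hy using (hv1 y hy).deriv
    have hd2 : HasDerivAt (fun y => W1 y * (1 / α) * w y ^ (1 / α - 1))
        (W2 x * (1 / α) * w x ^ (1 / α - 1) +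
          W1 x * (1 / α) * (W1 x * (1 / α - 1) * w x ^ (1 / α - 1 - 1))) x :=
      ((hW1d x hx).mul_const (1 / α)).mul ((hwd x hx).rpow_const (Or.inl hwx.ne'))
    have hiter : iteratedDeriv 2 (fun t => w t ^ (1 / α)) x =
        W2 x * (1 / α) * w x ^ (1 / α - 1) +
          W1 x * (1 / α) * (W1 x * (1 / α - 1) * w x ^ (1 / α - 1 - 1)) := by
      rw [iteratedDeriv_succ, iteratedDeriv_one, hveq.deriv_eq]
      exact hd2.deriv
    have hcon := hwconc x hx
    rw [hiter] at hcon
    have hpow : (0 : ℝ) < α * w x ^ (2 - 1 / α) :=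
      mul_pos hα (Real.rpow_pos_of_pos hwx _)
    have h2 : (W2 x * (1 / α) * w x ^ (1 / α - 1) +
        W1 x * (1 / α) * (W1 x * (1 / α - 1) * w x ^ (1 / α - 1 - 1)) + w x ^ (1 / α)) *
        (α * w x ^ (2 - 1 / α)) ≤ 0 :=
      mul_nonpos_of_nonpos_of_nonneg hcon hpow.le
    have e1 : w x ^ (1 / α - 1) * w x ^ (2 - 1 / α) = w x := by
      rw [← Real.rpow_add hwx, show 1 / α - 1 + (2 - 1 / α) = 1 by ring, Real.rpow_one]
    have e2 : w x ^ (1 / α - 1 - 1) * w x ^ (2 - 1 / α) = 1 := by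
      rw [← Real.rpow_add hwx, show 1 / α - 1 - 1 + (2 - 1 / α) = 0 by ring, Real.rpow_zero]
    have e3 : w x ^ (1 / α) * w x ^ (2 - 1 / α) = w x * w x := by
      rw [← Real.rpow_add hwx, show 1 / α + (2 - 1 / α) = 2 by ring,
        show (2 : ℝ) = ((2 : ℕ) : ℝ) by norm_num, Real.rpow_natCast]
      ring
    have hi : α * (1 / α) = 1 := by field_simp
    have expand : (W2 x * (1 / α) * w x ^ (1 / α - 1) +
        W1 x * (1 / α) * (W1 x * (1 / α - 1) * w x ^ (1 / α - 1 - 1)) + w x ^ (1 / α)) *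
        (α * w x ^ (2 - 1 / α)) =
        W2 x * w x + (1 / α - 1) * W1 x ^ 2 + α * (w x * w x) := by
      linear_combination (α * (1 / α)) * W2 x * e1 +
        (α * (1 / α) * (1 / α - 1) * W1 x ^ 2) * e2 + α * e3 +
        (W2 x * w x + (1 / α - 1) * W1 x ^ 2) * hi
    rw [expand] at h2
    exact h2
  -- ## The primitive F, the dual function G = F/w and its derivative
  set F : ℝ → ℝ := fun θ => ∫ t in a..θ, u t * w t with hFdef
  have huwc : ContinuousOn (fun t => u t * w t) (Ioo (0 : ℝ) β) :=
    hu.continuous.continuousOn.mul hwc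
  have hFd : ∀ x ∈ Icc a b, HasDerivAt F (u x * w x) x := by
    intro x hx
    have hxS := hIcc hx
    apply intervalIntegral.integral_hasDerivAt_right
    · apply ContinuousOn.intervalIntegrable
      apply huwc.mono
      refine subset_trans ?_ hIcc
      rw [uIcc_of_le hx.1]
      exact Icc_subset_Icc le_rfl hx.2
    · exact huwc.stronglyMeasurableAtFilter hSopen x hxS
    · exact huwc.continuousAt (hSopen.mem_nhds hxS)
  have hFa : F a = 0 := intervalIntegral.integral_same
  have hFc : ContinuousOn F (Icc a b) := fun x hx =>
    (hFd x hx).continuousAt.continuousWithinAt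
  -- conversion between the set integrals and the interval integrals
  have convert_int : ∀ g : ℝ → ℝ, (∀ x, x ∉ Ioo a b → g x = 0) →
      (∫ θ in Ioo (0 : ℝ) β, g θ) = ∫ x in a..b, g x := by
    intro g hg
    rw [intervalIntegral.integral_of_le hab.le]
    rw [setIntegral_eq_integral_of_forall_compl_eq_zero
      (fun x hx => hg x (fun h => hx (Ioo_subset_Ioo ha.le hb.le h)))]
    rw [setIntegral_eq_integral_of_forall_compl_eq_zero
      (fun x hx => hg x (fun h => hx (Ioo_subset_Ioc_self h)))]
  have huzero : ∀ x, x ∉ Ioo a b → u x = 0 := fun x hx =>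
    image_eq_zero_of_notMem_tsupport (fun h => hx (hsupp h))
  have hu'zero : ∀ x, x ∉ Ioo a b → deriv u x = 0 := by
    intro x hx
    by_contra h
    exact hx (hsupp (support_deriv_subset h))
  have hFb : F b = 0 := by
    have := convert_int (fun t => u t * w t)
      (fun x hx => by show u x * w x = 0; rw [huzero x hx, zero_mul])
    simp only [hFdef]
    rw [← this, horth]
  have hua : u a = 0 := huzero a (fun h => lt_irrefl a h.1)
  have hub : u b = 0 := huzero b (fun h => lt_irrefl b h.2)
  set G : ℝ → ℝ := fun θ => F θ / w θ with hGdef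
  set Gd : ℝ → ℝ := fun x => (u x * w x * w x - F x * W1 x) / w x ^ 2 with hGddef
  have hGd : ∀ x ∈ Icc a b, HasDerivAt G (Gd x) x := fun x hx =>
    (hFd x hx).div (hwd x (hIcc hx)) (hwpos x (hIcc hx)).ne'
  have hGc : ContinuousOn G (Icc a b) := fun x hx =>
    (hGd x hx).continuousAt.continuousWithinAt
  have hGa : G a = 0 := by simp [hGdef, hFa]
  have hGb : G b = 0 := by simp [hGdef, hFb]
  -- continuity collection on Icc a b
  have hwcI : ContinuousOn w (Icc a b) := hwc.mono hIcc
  have hW1cI : ContinuousOn W1 (Icc a b) := hW1c.mono hIcc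
  have hW2cI : ContinuousOn W2 (Icc a b) := hW2c.mono hIcc
  have hwne : ∀ x ∈ Icc a b, w x ≠ 0 := fun x hx => (hwpos x (hIcc hx)).ne'
  have hucI : ContinuousOn u (Icc a b) := hu.continuous.continuousOn
  have hu'cI : ContinuousOn (deriv u) (Icc a b) := (hu.continuous_deriv (by simp)).continuousOn
  have hGdc : ContinuousOn Gd (Icc a b) := by
    apply ContinuousOn.div
    · exact ((hucI.mul hwcI).mul hwcI).sub (hFc.mul hW1cI)
    · exact hwcI.pow 2
    · exact fun x hx => pow_ne_zero 2 (hwne x hx)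
  have II : ∀ f : ℝ → ℝ, ContinuousOn f (Icc a b) → IntervalIntegrable f volume a b :=
    fun f hf => hf.intervalIntegrable_of_Icc hab.le
  have hud : ∀ x, HasDerivAt u (deriv u x) x := fun x =>
    (hu.differentiable (by simp) x).hasDerivAt
  -- ## Integration by parts 1 : ∫ u² w = - ∫ u' F
  have ibp1 : ∫ x in a..b, u x * (u x * w x) =
      u b * F b - u a * F a - ∫ x in a..b, deriv u x * F x :=
    intervalIntegral.integral_mul_deriv_eq_deriv_mul
      (fun x _ => hud x)
      (fun x hx => hFd x (by rwa [uIcc_of_le hab.le] at hx))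
      (II _ hu'cI) (II _ (hucI.mul hwcI))
  -- ## Integration by parts 2 : ∫ G² W2 = - ∫ 2 G Gd W1
  have hG2d : ∀ x ∈ uIcc a b, HasDerivAt (fun y => G y ^ 2) (2 * G x * Gd x) x := by
    intro x hx
    rw [uIcc_of_le hab.le] at hx
    have h : HasDerivAt (fun y => G y ^ 2) _ x := (hGd x hx).pow 2
    norm_num at h
    convert h using 1 <;> try ring
  have ibp2 : ∫ x in a..b, G x ^ 2 * W2 x =
      G b ^ 2 * W1 b - G a ^ 2 * W1 a - ∫ x in a..b, (2 * G x * Gd x) * W1 x :=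
    intervalIntegral.integral_mul_deriv_eq_deriv_mul
      hG2d
      (fun x hx => hW1d x (hIcc (by rwa [uIcc_of_le hab.le] at hx)))
      (II _ (((continuousOn_const.mul hGc).mul hGdc)))
      (II _ hW2cI)
  -- ## Main integral quantities
  set I0 := ∫ x in a..b, u x ^ 2 * w x with hI0def
  set I1 := ∫ x in a..b, deriv u x ^ 2 * w x with hI1def
  set Cc := ∫ x in a..b, G x ^ 2 * w x with hCcdef
  set Bb := ∫ x in a..b, deriv u x * (G x * w x) with hBbdef
  clear_value I0 I1 Cc Bb
  have hI0nn : 0 ≤ I0 := by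
    rw [hI0def]
    exact intervalIntegral.integral_nonneg hab.le
      (fun x hx => mul_nonneg (sq_nonneg _) (hwpos x (hIcc hx)).le)
  have hI1nn : 0 ≤ I1 := by
    rw [hI1def]
    exact intervalIntegral.integral_nonneg hab.le
      (fun x hx => mul_nonneg (sq_nonneg _) (hwpos x (hIcc hx)).le)
  have hCnn : 0 ≤ Cc := by
    rw [hCcdef]
    exact intervalIntegral.integral_nonneg hab.le
      (fun x hx => mul_nonneg (sq_nonneg _) (hwpos x (hIcc hx)).le)
  -- I0 = -Bb
  have hI0B : I0 = -Bb := by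
    have e1 : I0 = ∫ x in a..b, u x * (u x * w x) := by
      rw [hI0def]
      exact intervalIntegral.integral_congr (fun x _ => by ring)
    have e2 : (∫ x in a..b, deriv u x * F x) = Bb := by
      rw [hBbdef]
      apply intervalIntegral.integral_congr
      intro x hx
      rw [uIcc_of_le hab.le] at hx
      have hgw : G x * w x = F x := by
        show F x / w x * w x = F x
        rw [div_mul_cancel₀ _ (hwne x hx)]
      show deriv u x * F x = deriv u x * (G x * w x)
      rw [hgw]
    rw [e1, ibp1, hFa, hFb, hua, hub, e2]
    ring
  -- ## Bochner-type estimate : I0/(1+α) + α Cc ≤ I0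
  have h1α : (0 : ℝ) < 1 + α := by linarith
  have hptid : ∀ x ∈ Icc a b, u x ^ 2 * w x =
      Gd x ^ 2 * w x + G x ^ 2 * W1 x ^ 2 / w x + (2 * G x * Gd x) * W1 x := by
    intro x hx
    have hwx := hwpos x (hIcc hx)
    simp only [hGdef, hGddef]
    field_simp
    ring
  have hsplit : I0 = ∫ x in a..b,
      (Gd x ^ 2 * w x + G x ^ 2 * W1 x ^ 2 / w x - G x ^ 2 * W2 x) := by
    have e0 : I0 = ∫ x in a..b,
        (Gd x ^ 2 * w x + G x ^ 2 * W1 x ^ 2 / w x + (2 * G x * Gd x) * W1 x) := by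
      rw [hI0def]
      exact intervalIntegral.integral_congr (fun x hx =>
        hptid x (by rwa [uIcc_of_le hab.le] at hx))
    have hint1 : IntervalIntegrable
        (fun x => Gd x ^ 2 * w x + G x ^ 2 * W1 x ^ 2 / w x) volume a b := by
      apply II
      exact ((hGdc.pow 2).mul hwcI).add
        (((hGc.pow 2).mul (hW1cI.pow 2)).div hwcI hwne)
    have hint2 : IntervalIntegrable (fun x => (2 * G x * Gd x) * W1 x) volume a b :=
      II _ (((continuousOn_const.mul hGc).mul hGdc).mul hW1cI)
    have hint3 : IntervalIntegrable (fun x => G x ^ 2 * W2 x) volume a b :=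
      II _ ((hGc.pow 2).mul hW2cI)
    have e1 : I0 = (∫ x in a..b, (Gd x ^ 2 * w x + G x ^ 2 * W1 x ^ 2 / w x)) +
        ∫ x in a..b, (2 * G x * Gd x) * W1 x := by
      rw [e0, intervalIntegral.integral_add hint1 hint2]
    have e2 : (∫ x in a..b, (2 * G x * Gd x) * W1 x) =
        - ∫ x in a..b, G x ^ 2 * W2 x := by
      rw [ibp2, hGa, hGb]; ring
    have e3 : (∫ x in a..b, (Gd x ^ 2 * w x + G x ^ 2 * W1 x ^ 2 / w x - G x ^ 2 * W2 x))
        = (∫ x in a..b, (Gd x ^ 2 * w x + G x ^ 2 * W1 x ^ 2 / w x)) -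
          ∫ x in a..b, G x ^ 2 * W2 x :=
      intervalIntegral.integral_sub hint1 hint3
    rw [e1, e2, e3]
    ring
  have hBochner_pt : ∀ x ∈ Icc a b,
      u x ^ 2 * w x / (1 + α) + α * (G x ^ 2 * w x) ≤
        Gd x ^ 2 * w x + G x ^ 2 * W1 x ^ 2 / w x - G x ^ 2 * W2 x := by
    intro x hx
    have hwx := hwpos x (hIcc hx)
    have hkey := key x (hIcc hx)
    have hueq : u x = Gd x + G x * W1 x / w x := by
      simp only [hGdef, hGddef]
      field_simp
      ring
    have hdiff : Gd x ^ 2 * w x + G x ^ 2 * W1 x ^ 2 / w x - G x ^ 2 * W2 x -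
        (u x ^ 2 * w x / (1 + α) + α * (G x ^ 2 * w x)) =
        (α * (Gd x * w x) - G x * W1 x) ^ 2 / (α * (1 + α) * w x) +
          (-(W2 x * w x + (1 / α - 1) * W1 x ^ 2 + α * (w x * w x))) * (G x ^ 2 / w x) := by
      rw [hueq]
      field_simp
      ring
    have t1 : 0 ≤ (α * (Gd x * w x) - G x * W1 x) ^ 2 / (α * (1 + α) * w x) := by positivity
    have t2 : 0 ≤ (-(W2 x * w x + (1 / α - 1) * W1 x ^ 2 + α * (w x * w x))) *
        (G x ^ 2 / w x) := by
      apply mul_nonneg (by linarith)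
      positivity
    linarith
  have hBochner : I0 / (1 + α) + α * Cc ≤ I0 := by
    have hintL : IntervalIntegrable
        (fun x => u x ^ 2 * w x / (1 + α) + α * (G x ^ 2 * w x)) volume a b := by
      apply II
      exact (((hucI.pow 2).mul hwcI).div_const _).add
        (continuousOn_const.mul ((hGc.pow 2).mul hwcI))
    have hintR : IntervalIntegrable
        (fun x => Gd x ^ 2 * w x + G x ^ 2 * W1 x ^ 2 / w x - G x ^ 2 * W2 x) volume a b := by
      apply II
      exact (((hGdc.pow 2).mul hwcI).add
        (((hGc.pow 2).mul (hW1cI.pow 2)).div hwcI hwne)).sub ((hGc.pow 2).mul hW2cI)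
    have hmono := intervalIntegral.integral_mono_on hab.le hintL hintR hBochner_pt
    have eL : (∫ x in a..b, (u x ^ 2 * w x / (1 + α) + α * (G x ^ 2 * w x))) =
        I0 / (1 + α) + α * Cc := by
      rw [hI0def, hCcdef]
      rw [intervalIntegral.integral_add (f := fun x => u x ^ 2 * w x / (1 + α))
        (g := fun x => α * (G x ^ 2 * w x))
        ((II _ ((hucI.pow 2).mul hwcI)).div_const _)
        (by exact (II _ ((hGc.pow 2).mul hwcI)).const_mul α),
        intervalIntegral.integral_div, intervalIntegral.integral_const_mul]
    rw [eL] at hmono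
    rw [← hsplit] at hmono
    exact hmono
  -- ## Cauchy–Schwarz : Bb² ≤ I1 Cc
  have hql : ∀ t : ℝ, 0 ≤ t ^ 2 * I1 + 2 * t * Bb + Cc := by
    intro t
    have h0 : 0 ≤ ∫ x in a..b, (t * deriv u x + G x) ^ 2 * w x :=
      intervalIntegral.integral_nonneg hab.le
        (fun x hx => mul_nonneg (sq_nonneg _) (hwpos x (hIcc hx)).le)
    have hint1 : IntervalIntegrable (fun x => t ^ 2 * (deriv u x ^ 2 * w x)) volume a b :=
      (II _ ((hu'cI.pow 2).mul hwcI)).const_mul _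
    have hint2 : IntervalIntegrable
        (fun x => (2 * t) * (deriv u x * (G x * w x))) volume a b :=
      (II _ (hu'cI.mul (hGc.mul hwcI))).const_mul _
    have hint3 : IntervalIntegrable (fun x => G x ^ 2 * w x) volume a b :=
      II _ ((hGc.pow 2).mul hwcI)
    have hexp : (∫ x in a..b, (t * deriv u x + G x) ^ 2 * w x) =
        t ^ 2 * I1 + 2 * t * Bb + Cc := by
      rw [hI1def, hBbdef, hCcdef]
      rw [show (fun x => (t * deriv u x + G x) ^ 2 * w x) =
          fun x => (t ^ 2 * (deriv u x ^ 2 * w x) +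
            (2 * t) * (deriv u x * (G x * w x))) + G x ^ 2 * w x from
        funext fun x => by ring]
      rw [intervalIntegral.integral_add (hint1.add hint2) hint3,
        intervalIntegral.integral_add hint1 hint2,
        intervalIntegral.integral_const_mul, intervalIntegral.integral_const_mul]
    rw [hexp] at h0
    exact h0
  have hcs : Bb ^ 2 ≤ I1 * Cc := by
    rcases eq_or_lt_of_le hI1nn with hI1 | hI1
    · have hB0 : Bb = 0 := by
        by_contra hB
        have h1 := hql (-(Cc + 1) / (2 * Bb))
        rw [← hI1] at h1
        have hBne : Bb ≠ 0 := hB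
        have e : 2 * (-(Cc + 1) / (2 * Bb)) * Bb = -(Cc + 1) := by
          field_simp
        rw [e] at h1
        nlinarith [sq_nonneg (-(Cc + 1) / (2 * Bb))]
      rw [hB0, ← hI1]
      norm_num
    · have h1 := hql (-Bb / I1)
      have e : (-Bb / I1) ^ 2 * I1 + 2 * (-Bb / I1) * Bb + Cc = Cc - Bb ^ 2 / I1 := by
        field_simp
        ring
      rw [e] at h1
      have h2 : Bb ^ 2 / I1 ≤ Cc := by linarith
      rw [div_le_iff₀ hI1] at h2
      linarith [h2, mul_comm Cc I1]
  -- ## Conclusion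
  have hCle : Cc ≤ I0 / (1 + α) := by
    have : α * Cc ≤ α * (I0 / (1 + α)) := by
      have : I0 - I0 / (1 + α) = α * (I0 / (1 + α)) := by field_simp; ring
      linarith [hBochner]
    exact le_of_mul_le_mul_left this hα
  have hgoal : (1 + α) * I0 ≤ I1 := by
    rcases hI0nn.eq_or_lt with h0 | h0
    · rw [← h0]
      simpa using hI1nn
    · have h2 : I0 ^ 2 ≤ I1 * (I0 / (1 + α)) := by
        have hb2 : Bb ^ 2 = I0 ^ 2 := by rw [hI0B]; ring
        calc I0 ^ 2 = Bb ^ 2 := hb2.symm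
          _ ≤ I1 * Cc := hcs
          _ ≤ I1 * (I0 / (1 + α)) := mul_le_mul_of_nonneg_left hCle hI1nn
      have h3 : I1 * (I0 / (1 + α)) = I1 * I0 / (1 + α) := by ring
      rw [h3, le_div_iff₀ h1α] at h2
      have := mul_lt_mul_of_pos_left h0 h1α
      nlinarith
  have eg1 : (∫ θ in Ioo (0 : ℝ) β, u θ ^ 2 * w θ) = I0 := by
    rw [hI0def]
    exact convert_int _ (fun x hx => by show u x ^ 2 * w x = 0; rw [huzero x hx]; ring)
  have eg2 : (∫ θ in Ioo (0 : ℝ) β, deriv u θ ^ 2 * w θ) = I1 := by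
    rw [hI1def]
    exact convert_int _ (fun x hx => by show deriv u x ^ 2 * w x = 0; rw [hu'zero x hx]; ring)
  rw [eg1, eg2]
  exact hgoal
end

section
/- Let Σ ⊂ ℝⁿ be a nonempty open convex cone and let w be a positive, twice continuously differentiable function on Σ which is positively homogeneous of degree α > 0. Then w^{1/α} is concave in Σ if and only if for every x ∈ Σ the symmetric n×n matrix α ∇²(log w)(x) + ∇(log w)(x) ⊗ ∇(log w)(x) is negative semidefinite (equivalently, the Bakry–Émery tensor −∇² log w^{1/α} − ∇ log w^{1/α} ⊗ ∇ log w^{1/α} is positive semidefinite, i.e., the curvature-dimension condition CD(0, n+α) holds for Σ with reference measure w(x)dx). -/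
/-!
Write `u = w ^ (1/α)`, so that `log w = α log u`. Differentiating twice gives the pointwise
identity `α ∇²(log w) + ∇(log w) ⊗ ∇(log w) = (α² / u) ∇²u`, and `α² / u > 0`. The theorem is
then the second-order characterisation of concavity of the `C²` function `u` on the open convex
set `S`, which reduces to the one-variable criterion `g'' ≤ 0` on each line `t ↦ x + t • v`.
-/

open Set Filter Topology
open scoped RealInnerProductSpace

theorem concaveOn_iff_hasDerivAt2_nonpos {D : Set ℝ} (hDo : IsOpen D) (hDc : Convex ℝ D)
    {g g' g'' : ℝ → ℝ} (hg : ∀ t ∈ D, HasDerivAt g (g' t) t)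
    (hg' : ∀ t ∈ D, HasDerivAt g' (g'' t) t) :
    ConcaveOn ℝ D g ↔ ∀ t ∈ D, g'' t ≤ 0 := by
  constructor
  · intro h t ht
    have hanti : AntitoneOn g' D :=
      (h.antitoneOn_deriv fun t ht => (hg t ht).differentiableAt).congr
        fun t ht => (hg t ht).deriv
    exact (hg' t ht).hasDerivWithinAt.nonpos_of_antitoneOn (hDo.preperfect t ht) hanti
  · intro h
    refine concaveOn_of_hasDerivWithinAt2_nonpos (f' := g') (f'' := g'') hDc
      (fun t ht => (hg t ht).continuousAt.continuousWithinAt) ?_ ?_ ?_ <;>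
      rw [hDo.interior_eq]
    · exact fun t ht => (hg t ht).hasDerivWithinAt
    · exact fun t ht => (hg' t ht).hasDerivWithinAt
    · exact h

section

variable {E F : Type*} [NormedAddCommGroup E] [NormedSpace ℝ E]
  [NormedAddCommGroup F] [NormedSpace ℝ F]

theorem HasFDerivAt.hasDerivAt_comp_add_smul {f : E → F} {f' : E →L[ℝ] F} {x v : E} {t : ℝ}
    (hf : HasFDerivAt f f' (x + t • v)) : HasDerivAt (fun r : ℝ => f (x + r • v)) (f' v) t := by
  have hline : HasDerivAt (fun r : ℝ => x + r • v) v t := by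
    simpa using ((hasDerivAt_id t).smul_const v).const_add x
  exact hf.comp_hasDerivAt t hline

theorem ContDiffAt.hasDerivAt_fderiv_apply_comp_add_smul {f : E → F} {x v : E} {t : ℝ}
    (hf : ContDiffAt ℝ 2 f (x + t • v)) :
    HasDerivAt (fun r : ℝ => fderiv ℝ f (x + r • v) v)
      (iteratedFDeriv ℝ 2 f (x + t • v) ![v, v]) t := by
  have hdf : DifferentiableAt ℝ (fderiv ℝ f) (x + t • v) :=
    (hf.fderiv_right (m := 1) (by norm_num)).differentiableAt one_ne_zero
  rw [iteratedFDeriv_two_apply]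
  simpa using hdf.hasFDerivAt.hasDerivAt_comp_add_smul.clm_apply (hasDerivAt_const t v)

theorem AffineMap.coe_lineMap_self_add (x v : E) :
    ⇑(AffineMap.lineMap x (x + v) : ℝ →ᵃ[ℝ] E) = fun t => x + t • v := by
  ext t
  simp [AffineMap.lineMap_apply_module', add_comm]

theorem concaveOn_iff_concaveOn_comp_add_smul {s : Set E} (hs : Convex ℝ s) {f : E → ℝ} :
    ConcaveOn ℝ s f ↔
      ∀ x ∈ s, ∀ v : E, ConcaveOn ℝ {t : ℝ | x + t • v ∈ s} fun t => f (x + t • v) := by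
  constructor
  · intro h x _ v
    have := h.comp_affineMap (AffineMap.lineMap x (x + v))
    rwa [AffineMap.coe_lineMap_self_add] at this
  · refine fun h => ⟨hs, fun x hx y hy a b ha hb hab => ?_⟩
    have hcomb := (h x hx (y - x)).2 (x := 0) (y := 1) (by simpa) (by simpa) ha hb hab
    have hpt : x + b • (y - x) = a • x + b • y := by
      rw [eq_sub_of_add_eq hab]
      module
    simpa [hpt] using hcomb

theorem concaveOn_iff_iteratedFDeriv_two_nonpos {s : Set E} (hso : IsOpen s) (hsc : Convex ℝ s)
    {f : E → ℝ} (hf : ContDiffOn ℝ 2 f s) :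
    ConcaveOn ℝ s f ↔ ∀ x ∈ s, ∀ v : E, iteratedFDeriv ℝ 2 f x ![v, v] ≤ 0 := by
  have hline : ∀ x v : E, ConcaveOn ℝ {t : ℝ | x + t • v ∈ s} (fun t => f (x + t • v)) ↔
      ∀ t ∈ {t : ℝ | x + t • v ∈ s}, iteratedFDeriv ℝ 2 f (x + t • v) ![v, v] ≤ 0 := by
    intro x v
    have hC2 : ∀ t ∈ {t : ℝ | x + t • v ∈ s}, ContDiffAt ℝ 2 f (x + t • v) :=
      fun t ht => hf.contDiffAt (hso.mem_nhds ht)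
    refine concaveOn_iff_hasDerivAt2_nonpos (hso.preimage (by fun_prop))
      (by simpa [AffineMap.coe_lineMap_self_add] using
        hsc.affine_preimage (AffineMap.lineMap x (x + v)))
      (fun t ht => ((hC2 t ht).differentiableAt two_ne_zero).hasFDerivAt.hasDerivAt_comp_add_smul)
      (fun t ht => (hC2 t ht).hasDerivAt_fderiv_apply_comp_add_smul)
  rw [concaveOn_iff_concaveOn_comp_add_smul hsc]
  simp only [hline, mem_ofPred_eq]
  refine ⟨fun h x hx v => by simpa using h x hx v 0 (by simpa), fun h x _ v t ht => h _ ht v⟩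

theorem iteratedFDeriv_two_comp_apply {f : E → ℝ} {φ φ' : ℝ → ℝ} {φ'' : ℝ} {x : E}
    (hf : ContDiffAt ℝ 2 f x) (hφ : ∀ᶠ y in 𝓝 (f x), HasDerivAt φ (φ' y) y)
    (hφ' : HasDerivAt φ' φ'' (f x)) (v : E) :
    iteratedFDeriv ℝ 2 (fun y => φ (f y)) x ![v, v] =
      φ'' * fderiv ℝ f x v ^ 2 + φ' (f x) * iteratedFDeriv ℝ 2 f x ![v, v] := by
  have hfd : ∀ᶠ y in 𝓝 x, DifferentiableAt ℝ f y :=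
    (hf.eventually (by simp)).mono fun y hy => hy.differentiableAt two_ne_zero
  have hφf : ∀ᶠ y in 𝓝 x, HasDerivAt φ (φ' (f y)) (f y) :=
    hf.continuousAt.eventually hφ
  have hfderiv : fderiv ℝ (fun y => φ (f y)) =ᶠ[𝓝 x] fun y => φ' (f y) • fderiv ℝ f y := by
    filter_upwards [hfd, hφf] with y hfy hφy
    exact (hφy.comp_hasFDerivAt y hfy.hasFDerivAt).fderiv
  have hdf : HasFDerivAt (fderiv ℝ f) (fderiv ℝ (fderiv ℝ f) x) x :=
    ((hf.fderiv_right (m := 1) (by norm_num)).differentiableAt one_ne_zero).hasFDerivAt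
  have hprod : HasFDerivAt (fun y => φ' (f y) • fderiv ℝ f y)
      (φ' (f x) • fderiv ℝ (fderiv ℝ f) x + (φ'' • fderiv ℝ f x).smulRight (fderiv ℝ f x)) x :=
    (hφ'.comp_hasFDerivAt x (hf.differentiableAt two_ne_zero).hasFDerivAt).smul hdf
  rw [iteratedFDeriv_two_apply, iteratedFDeriv_two_apply, hfderiv.fderiv_eq, hprod.fderiv]
  simp only [Matrix.cons_val_zero, Matrix.cons_val_one, Matrix.cons_val_fin_one, add_apply,
    smul_apply, ContinuousLinearMap.smulRight_apply, smul_eq_mul]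
  ring

theorem mul_iteratedFDeriv_two_log_add_sq {w : E → ℝ} {x : E} (hw : ContDiffAt ℝ 2 w x)
    (hwx : 0 < w x) {α : ℝ} (hα : α ≠ 0) (v : E) :
    α * iteratedFDeriv ℝ 2 (fun y => Real.log (w y)) x ![v, v] +
        fderiv ℝ (fun y => Real.log (w y)) x v ^ 2 =
      α ^ 2 / w x ^ (1 / α) * iteratedFDeriv ℝ 2 (fun y => w y ^ (1 / α)) x ![v, v] := by
  have hnear : ∀ᶠ y in 𝓝 (w x), y ≠ 0 := eventually_ne_nhds hwx.ne'
  have hlog2 := iteratedFDeriv_two_comp_apply hw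
    (hnear.mono fun y hy => Real.hasDerivAt_log hy) (hasDerivAt_inv hwx.ne') v
  have hrpow2 := iteratedFDeriv_two_comp_apply (φ := fun y => y ^ (1 / α)) hw
    (hnear.mono fun y hy => Real.hasDerivAt_rpow_const (Or.inl hy))
    ((Real.hasDerivAt_rpow_const (p := 1 / α - 1) (Or.inl hwx.ne')).const_mul (1 / α)) v
  have hlog1 : fderiv ℝ (fun y => Real.log (w y)) x v = (w x)⁻¹ * fderiv ℝ w x v := by
    simp [((hw.differentiableAt two_ne_zero).hasFDerivAt.log hwx.ne').fderiv]
  rw [hlog2, hrpow2, hlog1, sub_sub, one_add_one_eq_two, Real.rpow_sub hwx, Real.rpow_sub hwx,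
    Real.rpow_one, Real.rpow_two]
  have hu : 0 < w x ^ (1 / α) := Real.rpow_pos_of_pos hwx _
  field_simp
  ring

end

theorem concave_iff_curvature_dimension_general {n : ℕ}
    (S : Set (EuclideanSpace ℝ (Fin n))) (hSopen : IsOpen S)
    (hSconv : Convex ℝ S)
    (α : ℝ) (hα : 0 < α)
    (w : EuclideanSpace ℝ (Fin n) → ℝ)
    (hwpos : ∀ x ∈ S, 0 < w x)
    (hwC2 : ContDiffOn ℝ 2 w S) :
    (ConcaveOn ℝ S fun x => w x ^ (1 / α)) ↔
      ∀ x ∈ S, ∀ v : EuclideanSpace ℝ (Fin n),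
        α * iteratedFDeriv ℝ 2 (fun y => Real.log (w y)) x ![v, v] +
          (⟪gradient (fun y => Real.log (w y)) x, v⟫) ^ 2 ≤ 0 := by
  rw [concaveOn_iff_iteratedFDeriv_two_nonpos hSopen hSconv
    (hwC2.rpow_const_of_ne fun x hx => (hwpos x hx).ne')]
  refine forall₂_congr fun x hx => forall_congr' fun v => ?_
  have hscale : 0 < α ^ 2 / w x ^ (1 / α) := by
    have := hwpos x hx
    positivity
  rw [inner_gradient_left, mul_iteratedFDeriv_two_log_add_sq
    (hwC2.contDiffAt (hSopen.mem_nhds hx)) (hwpos x hx) hα.ne']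
  exact ⟨mul_nonpos_of_nonneg_of_nonpos hscale.le, (nonpos_of_mul_nonpos_right · hscale)⟩

/-- For a positive `C²` weight `w` on a nonempty open convex cone `S ⊆ ℝⁿ`, positively
homogeneous of degree `α > 0`, the concavity of `w^{1/α}` in `S` is equivalent to the
negative semidefiniteness of `α ∇²(log w) + ∇(log w) ⊗ ∇(log w)` at every point of `S`
(i.e. to the curvature-dimension condition `CD(0, n+α)`, the nonnegativity of the
Bakry–Émery tensor `-∇² log w^{1/α} - ∇ log w^{1/α} ⊗ ∇ log w^{1/α}`). -/
theorem concave_iff_curvature_dimension {n : ℕ}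
    (S : Set (EuclideanSpace ℝ (Fin n))) (hSopen : IsOpen S) (hSne : S.Nonempty)
    (hSconv : Convex ℝ S) (hScone : ∀ x ∈ S, ∀ t : ℝ, 0 < t → t • x ∈ S)
    (α : ℝ) (hα : 0 < α)
    (w : EuclideanSpace ℝ (Fin n) → ℝ)
    (hwpos : ∀ x ∈ S, 0 < w x)
    (hwC2 : ContDiffOn ℝ 2 w S)
    (hwhom : ∀ t : ℝ, 0 < t → ∀ x ∈ S, w (t • x) = t ^ α * w x) :
    (ConcaveOn ℝ S fun x => w x ^ (1 / α)) ↔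
      ∀ x ∈ S, ∀ v : EuclideanSpace ℝ (Fin n),
        α * iteratedFDeriv ℝ 2 (fun y => Real.log (w y)) x ![v, v] +
          (⟪gradient (fun y => Real.log (w y)) x, v⟫) ^ 2 ≤ 0 :=
  concave_iff_curvature_dimension_general S hSopen hSconv α hα w hwpos hwC2
end

section
/- Let Σ ⊂ ℝⁿ be a nonempty open cone and let w : Σ → ℝ be positive, differentiable, positively homogeneous of degree α > 0, and such that w^{1/α} is concave in Σ. Set D = n + α. Then for all x, z ∈ Σ and every symmetric positive semidefinite n×n real matrix M, one has (w(z)/w(x)) · det M ≤ ( ( (∇w(x)·z)/w(x) + tr M ) / D )^D. -/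
open scoped RealInnerProductSpace

/-!
Since `v = w^{1/α}` is concave and, by Euler's identity, `Dv(x) x = v(x)`, the tangent plane of
`v` at `x` passes through the origin; hence `v(z) ≤ Dv(x) z`, i.e.
`(w(z)/w(x))^{1/α} ≤ a := (∇w(x)·z) / (α w(x))`. By AM-GM on the eigenvalues,
`det M ≤ b^n` with `b = tr M / n`, and the weighted AM-GM inequality
`a^α b^n ≤ ((α a + n b)/(n + α))^{n+α}` finishes the estimate.
-/

theorem Real.prod_le_sum_div_card_pow {ι : Type*} (s : Finset ι) (z : ι → ℝ)
    (hz : ∀ i ∈ s, 0 ≤ z i) : ∏ i ∈ s, z i ≤ ((∑ i ∈ s, z i) / s.card) ^ s.card := by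
  rcases s.eq_empty_or_nonempty with rfl | hs
  · simp
  have hcard : (0 : ℝ) < s.card := by exact_mod_cast hs.card_pos
  have amgm := Real.geom_mean_le_arith_mean s (fun _ => 1) z (fun _ _ => zero_le_one)
    (by simpa using hcard) hz
  simp only [Real.rpow_one, Finset.sum_const, nsmul_eq_mul, mul_one, one_mul] at amgm
  calc ∏ i ∈ s, z i = ((∏ i ∈ s, z i) ^ (s.card : ℝ)⁻¹) ^ s.card := by
        rw [← Real.rpow_natCast, ← Real.rpow_mul (Finset.prod_nonneg hz),
          inv_mul_cancel₀ hcard.ne', Real.rpow_one]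
    _ ≤ ((∑ i ∈ s, z i) / s.card) ^ s.card :=
        pow_le_pow_left₀ (Real.rpow_nonneg (Finset.prod_nonneg hz) _) amgm _

theorem Matrix.PosSemidef.det_le_trace_div_card_pow {ι : Type*} [Fintype ι] [DecidableEq ι]
    {A : Matrix ι ι ℝ} (hA : A.PosSemidef) :
    A.det ≤ (A.trace / Fintype.card ι) ^ Fintype.card ι := by
  rw [hA.1.det_eq_prod_eigenvalues, hA.1.trace_eq_sum_eigenvalues]
  simpa using Real.prod_le_sum_div_card_pow Finset.univ _ fun i _ => hA.eigenvalues_nonneg i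

theorem Real.rpow_mul_rpow_le_weighted_mean_rpow {a b p q : ℝ} (ha : 0 ≤ a) (hb : 0 ≤ b)
    (hp : 0 ≤ p) (hq : 0 ≤ q) (hpq : 0 < p + q) :
    a ^ p * b ^ q ≤ ((p * a + q * b) / (p + q)) ^ (p + q) := by
  have amgm := Real.geom_mean_le_arith_mean2_weighted (div_nonneg hp hpq.le)
    (div_nonneg hq hpq.le) ha hb (by field_simp)
  calc a ^ p * b ^ q = (a ^ (p / (p + q)) * b ^ (q / (p + q))) ^ (p + q) := by
        rw [Real.mul_rpow (by positivity) (by positivity), ← Real.rpow_mul ha,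
          ← Real.rpow_mul hb, div_mul_cancel₀ _ hpq.ne', div_mul_cancel₀ _ hpq.ne']
    _ ≤ (p / (p + q) * a + q / (p + q) * b) ^ (p + q) := by gcongr
    _ = ((p * a + q * b) / (p + q)) ^ (p + q) := by ring_nf

section Calculus

variable {E : Type*} [NormedAddCommGroup E] [NormedSpace ℝ E]

theorem HasFDerivAt.apply_self_eq_of_homogeneous {w : E → ℝ} {w' : E →L[ℝ] ℝ} {x : E} {α : ℝ}
    (hw : HasFDerivAt w w' x) (hhom : ∀ t : ℝ, 0 < t → w (t • x) = t ^ α * w x) :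
    w' x = α * w x := by
  have hray : HasDerivAt (fun t : ℝ => w (t • x)) (w' x) 1 := by
    have hline : HasDerivAt (fun t : ℝ => t • x) x 1 := by
      simpa using (hasDerivAt_id (1 : ℝ)).smul_const x
    exact (one_smul ℝ x ▸ hw).comp_hasDerivAt 1 hline
  have hpow : HasDerivAt (fun t : ℝ => t ^ α * w x) (α * w x) 1 := by
    simpa using ((Real.hasDerivAt_rpow_const (Or.inl one_ne_zero)).mul_const (w x) :
      HasDerivAt (fun t : ℝ => t ^ α * w x) _ 1)
  have heq : (fun t : ℝ => t ^ α * w x) =ᶠ[nhds 1] fun t => w (t • x) := by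
    filter_upwards [Ioi_mem_nhds one_pos] with t ht
    exact (hhom t ht).symm
  exact (hray.congr_of_eventuallyEq heq).unique hpow

theorem ConcaveOn.le_add_apply_sub_of_hasFDerivAt {S : Set E} {f : E → ℝ} {f' : E →L[ℝ] ℝ}
    {x y : E} (hf : ConcaveOn ℝ S f) (hx : x ∈ S) (hy : y ∈ S) (hf' : HasFDerivAt f f' x) :
    f y ≤ f x + f' (y - x) := by
  set γ : ℝ →ᵃ[ℝ] E := AffineMap.lineMap x y
  have hγ0 : γ 0 = x := AffineMap.lineMap_apply_zero x y
  have hγ1 : γ 1 = y := AffineMap.lineMap_apply_one x y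
  have hline : HasDerivAt γ (y - x) 0 := AffineMap.hasDerivAt_lineMap
  have hslope := (hf.comp_affineMap γ).slope_le_of_hasDerivAt (x := 0) (y := 1)
    (by simpa [hγ0]) (by simpa [hγ1]) zero_lt_one ((hγ0 ▸ hf').comp_hasDerivAt 0 hline)
  rw [slope_def_field, Function.comp_apply, Function.comp_apply, hγ0, hγ1] at hslope
  linarith [hslope]

theorem div_rpow_one_div_le_of_concaveOn_rpow {S : Set E} {w : E → ℝ} {w' : E →L[ℝ] ℝ}
    {x z : E} {α : ℝ} (hα : 0 < α) (hconc : ConcaveOn ℝ S fun y => w y ^ (1 / α))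
    (hx : x ∈ S) (hz : z ∈ S) (hwx : 0 < w x) (hwz : 0 ≤ w z) (hw : HasFDerivAt w w' x)
    (hhom : ∀ t : ℝ, 0 < t → w (t • x) = t ^ α * w x) :
    (w z / w x) ^ (1 / α) ≤ w' z / (α * w x) := by
  have hv : HasFDerivAt (fun y => w y ^ (1 / α)) ((1 / α * w x ^ (1 / α - 1)) • w') x :=
    hw.rpow_const (Or.inl hwx.ne')
  set c := 1 / α * w x ^ (1 / α - 1) with hc_def
  have hc : c * (α * w x) = w x ^ (1 / α) := by
    rw [hc_def, Real.rpow_sub hwx, Real.rpow_one]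
    field_simp
  have hsupp := hconc.le_add_apply_sub_of_hasFDerivAt hx hz hv
  rw [smul_apply, map_sub, hw.apply_self_eq_of_homogeneous hhom,
    smul_eq_mul, mul_sub, hc, add_sub_cancel] at hsupp
  rw [Real.div_rpow hwz hwx.le, div_le_iff₀ (by positivity)]
  calc w z ^ (1 / α) ≤ c * w' z := hsupp
    _ = w' z / (α * w x) * w x ^ (1 / α) := by rw [← hc]; field_simp

end Calculus

theorem abp_pointwise_estimate_general {n : ℕ}
    (S : Set (EuclideanSpace ℝ (Fin n))) (hSopen : IsOpen S)
    (α : ℝ) (hα : 0 < α)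
    (w : EuclideanSpace ℝ (Fin n) → ℝ)
    (hwpos : ∀ x ∈ S, 0 < w x)
    (hwdiff : DifferentiableOn ℝ w S)
    (hwhom : ∀ t : ℝ, 0 < t → ∀ x ∈ S, w (t • x) = t ^ α * w x)
    (hwconc : ConcaveOn ℝ S fun x => w x ^ (1 / α))
    (x : EuclideanSpace ℝ (Fin n)) (hx : x ∈ S)
    (z : EuclideanSpace ℝ (Fin n)) (hz : z ∈ S)
    (M : Matrix (Fin n) (Fin n) ℝ) (hM : M.PosSemidef) :
    w z / w x * M.det ≤
      ((⟪gradient w x, z⟫ / w x + M.trace) / ((n : ℝ) + α)) ^ ((n : ℝ) + α) := by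
  have hwx := hwpos x hx
  have hw : HasFDerivAt w (fderiv ℝ w x) x :=
    (hwdiff.differentiableAt (hSopen.mem_nhds hx)).hasFDerivAt
  rw [inner_gradient_left]
  set a := fderiv ℝ w x z / (α * w x) with ha_def
  have ha : (w z / w x) ^ (1 / α) ≤ a :=
    div_rpow_one_div_le_of_concaveOn_rpow hα hwconc hx hz hwx (hwpos z hz).le hw
      fun t ht => hwhom t ht x hx
  have ha0 : 0 ≤ a := (Real.rpow_nonneg (div_nonneg (hwpos z hz).le hwx.le) _).trans ha
  have hratio : w z / w x ≤ a ^ α := by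
    rwa [one_div, Real.rpow_inv_le_iff_of_pos (div_nonneg (hwpos z hz).le hwx.le) ha0 hα] at ha
  have hdet : M.det ≤ (M.trace / n) ^ (n : ℝ) := by
    simpa using hM.det_le_trace_div_card_pow
  calc w z / w x * M.det ≤ a ^ α * (M.trace / n) ^ (n : ℝ) :=
        mul_le_mul hratio hdet hM.det_nonneg (by positivity)
    _ ≤ ((α * a + n * (M.trace / n)) / (α + n)) ^ (α + n) :=
        Real.rpow_mul_rpow_le_weighted_mean_rpow ha0 (div_nonneg hM.trace_nonneg n.cast_nonneg)
          hα.le n.cast_nonneg (by positivity)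
    _ = ((fderiv ℝ w x z / w x + M.trace) / ((n : ℝ) + α)) ^ ((n : ℝ) + α) := by
        have htrace : (n : ℝ) * (M.trace / n) = M.trace := mul_div_cancel_of_imp' fun hn => by
          obtain rfl := Nat.cast_eq_zero.1 hn
          simp [Matrix.trace]
        rw [htrace, add_comm α, ha_def]
        field_simp

/-- The pointwise ABP estimate: if `w` is positive, differentiable, `α`-homogeneous
(`α > 0`) on a nonempty open cone `S ⊆ ℝⁿ` and `w^{1/α}` is concave in `S`, then for all
`x, z ∈ S` and every symmetric positive semidefinite matrix `M`,
`(w(z)/w(x)) ⋅ det M ≤ ( ((∇w(x)·z)/w(x) + tr M) / D )^D`, where `D = n + α`. -/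
theorem abp_pointwise_estimate {n : ℕ}
    (S : Set (EuclideanSpace ℝ (Fin n))) (hSopen : IsOpen S) (hSne : S.Nonempty)
    (hScone : ∀ x ∈ S, ∀ t : ℝ, 0 < t → t • x ∈ S)
    (α : ℝ) (hα : 0 < α)
    (w : EuclideanSpace ℝ (Fin n) → ℝ)
    (hwpos : ∀ x ∈ S, 0 < w x)
    (hwdiff : DifferentiableOn ℝ w S)
    (hwhom : ∀ t : ℝ, 0 < t → ∀ x ∈ S, w (t • x) = t ^ α * w x)
    (hwconc : ConcaveOn ℝ S fun x => w x ^ (1 / α))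
    (x : EuclideanSpace ℝ (Fin n)) (hx : x ∈ S)
    (z : EuclideanSpace ℝ (Fin n)) (hz : z ∈ S)
    (M : Matrix (Fin n) (Fin n) ℝ) (hMsym : M.IsSymm) (hM : M.PosSemidef) :
    w z / w x * M.det ≤
      ((⟪gradient w x, z⟫ / w x + M.trace) / ((n : ℝ) + α)) ^ ((n : ℝ) + α) :=
  abp_pointwise_estimate_general S hSopen α hα w hwpos hwdiff hwhom hwconc x hx z hz M hM
end
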